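/- Every connected claw-free graph has deficiency at most one; that is, if G is a connected graph with no induced K_{1,3}, then def(G) ≤ 1. -/

import Mathlib

open SimpleGraph

/-- The deficiency of a finite graph: number of vertices missed by a maximum matching,
i.e. `|V(G)| - 2ν(G)`. -/
noncomputable def deficiency {V : Type*} [Fintype V] (G : SimpleGraph V) : ℕ :=
  Fintype.card V - sSup {k : ℕ | ∃ M : G.Subgraph, M.IsMatching ∧ M.verts.ncard = k}

/-- The star `K_{1,n}`. -/
def starGraph (n : ℕ) : SimpleGraph (Unit ⊕ Fin n) := completeBipartiteGraph Unit (Fin n)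

/-- `T n`: the graph obtained by attaching two copies of `P₂` at one end of a path `Pₙ`
(the vertices of the path are `Sum.inl 0, …, Sum.inl (n-1)`; the branch vertex is
`Sum.inl (n-1)` and the end of `T n` is `Sum.inl 0`). -/
def Tgraph (n : ℕ) : SimpleGraph (Fin n ⊕ Fin 2) :=
  SimpleGraph.fromRel (fun a b =>
    match a, b with
    | Sum.inl i, Sum.inl j => (i : ℕ) + 1 = (j : ℕ)
    | Sum.inl i, Sum.inr _ => (i : ℕ) = n - 1
    | _, _ => False)

/-- The end vertex of (a copy of) `T p`. -/
def isTEnd {p : ℕ} : Fin p ⊕ Fin 2 → Prop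
  | Sum.inl i => (i : ℕ) = 0
  | Sum.inr _ => False

/-- `K̃ₙᵖ`: the graph obtained by attaching a copy of `T p` at each vertex of the
complete graph `Kₙ`, identifying each vertex of `Kₙ` with the end of its copy of `T p`. -/
def Ktilde (n p : ℕ) : SimpleGraph (Fin n × (Fin p ⊕ Fin 2)) :=
  SimpleGraph.fromRel (fun a b =>
    (a.1 = b.1 ∧ (Tgraph p).Adj a.2 b.2) ∨
    (a.1 ≠ b.1 ∧ isTEnd a.2 ∧ isTEnd b.2))

/-- `Fₙ¹`: the path `P_{2n+1}` with a pendant vertex attached at its center. -/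
def F1 (n : ℕ) : SimpleGraph (Fin (2 * n + 1) ⊕ Unit) :=
  SimpleGraph.fromRel (fun a b =>
    match a, b with
    | Sum.inl i, Sum.inl j => (i : ℕ) + 1 = (j : ℕ)
    | Sum.inl i, Sum.inr _ => (i : ℕ) = n
    | _, _ => False)

/-- `Fₙ²`: the triangle `K₃` with a copy of `Pₙ` attached at each vertex
(the triangle vertices are `(i, 0)`). -/
def F2 (n : ℕ) : SimpleGraph (Fin 3 × Fin n) :=
  SimpleGraph.fromRel (fun a b =>
    (a.1 = b.1 ∧ (a.2 : ℕ) + 1 = (b.2 : ℕ)) ∨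
    (a.1 ≠ b.1 ∧ (a.2 : ℕ) = 0 ∧ (b.2 : ℕ) = 0))

/-- `Fₙ³`: the cycle `C₄` with a copy of `Pₙ` attached at each of two nonadjacent
vertices. The two paths are `(k, 0), …, (k, n-1)` for `k : Fin 2`; the two other cycle
vertices are `Sum.inr 0` and `Sum.inr 1`, each adjacent to `(0,0)` and `(1,0)`. -/
def F3 (n : ℕ) : SimpleGraph ((Fin 2 × Fin n) ⊕ Fin 2) :=
  SimpleGraph.fromRel (fun a b =>
    match a, b with
    | Sum.inl (k, i), Sum.inl (k', i') => k = k' ∧ (i : ℕ) + 1 = (i' : ℕ)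
    | Sum.inl (_, i), Sum.inr _ => (i : ℕ) = 0
    | _, _ => False)

/-- `Fₙ⁴`: `Fₙ³` together with the edge joining its two vertices of degree 3. -/
def F4 (n : ℕ) : SimpleGraph ((Fin 2 × Fin n) ⊕ Fin 2) :=
  SimpleGraph.fromRel (fun a b =>
    match a, b with
    | Sum.inl (k, i), Sum.inl (k', i') =>
        (k = k' ∧ (i : ℕ) + 1 = (i' : ℕ)) ∨ (k ≠ k' ∧ (i : ℕ) = 0 ∧ (i' : ℕ) = 0)
    | Sum.inl (_, i), Sum.inr _ => (i : ℕ) = 0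
    | _, _ => False)

/-- `F̃ₙᵖ`: the triangle `K₃` with a copy of `T p` attached (by its end) at one vertex and
a copy of `Pₙ` attached at each of the other two vertices. -/
def Ftilde (n p : ℕ) : SimpleGraph ((Fin p ⊕ Fin 2) ⊕ (Fin 2 × Fin n)) :=
  SimpleGraph.fromRel (fun a b =>
    match a, b with
    | Sum.inl x, Sum.inl y => (Tgraph p).Adj x y
    | Sum.inl x, Sum.inr (_, i) => isTEnd x ∧ (i : ℕ) = 0
    | Sum.inr (k, i), Sum.inr (k', i') =>
        (k = k' ∧ (i : ℕ) + 1 = (i' : ℕ)) ∨ (k ≠ k' ∧ (i : ℕ) = 0 ∧ (i' : ℕ) = 0)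
    | _, _ => False)

/-- `Bᵢ`: the graph obtained by attaching two copies of `P₂` at the end of `T_{i+2}`. -/
def Bgraph (i : ℕ) : SimpleGraph ((Fin (i + 2) ⊕ Fin 2) ⊕ Fin 2) :=
  SimpleGraph.fromRel (fun a b =>
    match a, b with
    | Sum.inl x, Sum.inl y => (Tgraph (i + 2)).Adj x y
    | Sum.inl x, Sum.inr _ => isTEnd x
    | _, _ => False)

/-- `H¹_{s,t}`: the union of `s+1` disjoint paths `Qᵢ` on `t` vertices (vertices `(i, j)`)
together with new vertices `vᵢ = (i, 0)` and `wᵢ = (i, 1)` (for `i : Fin s`) and the edges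
`vᵢwᵢ`, `vᵢ uᵢᵗ`, `vᵢ u_{i+1}¹`. -/
def H1graph (s t : ℕ) : SimpleGraph ((Fin (s + 1) × Fin t) ⊕ (Fin s × Fin 2)) :=
  SimpleGraph.fromRel (fun a b =>
    match a, b with
    | Sum.inl (i, j), Sum.inl (i', j') => i = i' ∧ (j : ℕ) + 1 = (j' : ℕ)
    | Sum.inl (i, j), Sum.inr (k, l) =>
        (l : ℕ) = 0 ∧ (((i : ℕ) = (k : ℕ) ∧ (j : ℕ) = t - 1) ∨
          ((i : ℕ) = (k : ℕ) + 1 ∧ (j : ℕ) = 0))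
    | Sum.inr (k, l), Sum.inr (k', l') => k = k' ∧ l ≠ l'
    | _, _ => False)

/-- `H³_{s,t}`: the union of `s+1` disjoint paths `Qᵢ` on `t` vertices together with new
vertices `vᵢ, wᵢ` (`i : Fin s`), `x = Sum.inr (Sum.inr 0)`, `y = Sum.inr (Sum.inr 1)`, and
the edges `x u₁¹`, `u_{s+1}ᵗ y`, and `vᵢ uᵢᵗ`, `vᵢ u_{i+1}¹`, `wᵢ uᵢᵗ`, `wᵢ u_{i+1}¹`. -/
def H3graph (s t : ℕ) :
    SimpleGraph ((Fin (s + 1) × Fin t) ⊕ ((Fin s × Fin 2) ⊕ Fin 2)) :=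
  SimpleGraph.fromRel (fun a b =>
    match a, b with
    | Sum.inl (i, j), Sum.inl (i', j') => i = i' ∧ (j : ℕ) + 1 = (j' : ℕ)
    | Sum.inl (i, j), Sum.inr (Sum.inl (k, _)) =>
        ((i : ℕ) = (k : ℕ) ∧ (j : ℕ) = t - 1) ∨ ((i : ℕ) = (k : ℕ) + 1 ∧ (j : ℕ) = 0)
    | Sum.inl (i, j), Sum.inr (Sum.inr m) =>
        ((m : ℕ) = 0 ∧ (i : ℕ) = 0 ∧ (j : ℕ) = 0) ∨
          ((m : ℕ) = 1 ∧ (i : ℕ) = s ∧ (j : ℕ) = t - 1)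
    | _, _ => False)

/-- `H⁴_{s,t}`: `H³_{s,t}` together with the edges `uᵢᵗ u_{i+1}¹` for `i ∈ [s]`. -/
def H4graph (s t : ℕ) :
    SimpleGraph ((Fin (s + 1) × Fin t) ⊕ ((Fin s × Fin 2) ⊕ Fin 2)) :=
  SimpleGraph.fromRel (fun a b =>
    match a, b with
    | Sum.inl (i, j), Sum.inl (i', j') =>
        (i = i' ∧ (j : ℕ) + 1 = (j' : ℕ)) ∨
          ((i : ℕ) + 1 = (i' : ℕ) ∧ (j : ℕ) = t - 1 ∧ (j' : ℕ) = 0)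
    | Sum.inl (i, j), Sum.inr (Sum.inl (k, _)) =>
        ((i : ℕ) = (k : ℕ) ∧ (j : ℕ) = t - 1) ∨ ((i : ℕ) = (k : ℕ) + 1 ∧ (j : ℕ) = 0)
    | Sum.inl (i, j), Sum.inr (Sum.inr m) =>
        ((m : ℕ) = 0 ∧ (i : ℕ) = 0 ∧ (j : ℕ) = 0) ∨
          ((m : ℕ) = 1 ∧ (i : ℕ) = s ∧ (j : ℕ) = t - 1)
    | _, _ => False)

/-- `H̃ᵖ_{s,t}`: the union of `s+1` disjoint paths `Qᵢ` on `t` vertices and `s` disjoint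
copies `Rᵢ` of `T p` with ends `vᵢ = (i, end)`, together with the edges
`uᵢᵗ u_{i+1}¹`, `uᵢᵗ vᵢ`, `u_{i+1}¹ vᵢ` for `i ∈ [s]`. -/
def Htilde (s t p : ℕ) :
    SimpleGraph ((Fin (s + 1) × Fin t) ⊕ (Fin s × (Fin p ⊕ Fin 2))) :=
  SimpleGraph.fromRel (fun a b =>
    match a, b with
    | Sum.inl (i, j), Sum.inl (i', j') =>
        (i = i' ∧ (j : ℕ) + 1 = (j' : ℕ)) ∨
          ((i : ℕ) + 1 = (i' : ℕ) ∧ (j : ℕ) = t - 1 ∧ (j' : ℕ) = 0)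
    | Sum.inl (i, j), Sum.inr (k, x) =>
        isTEnd x ∧ (((i : ℕ) = (k : ℕ) ∧ (j : ℕ) = t - 1) ∨
          ((i : ℕ) = (k : ℕ) + 1 ∧ (j : ℕ) = 0))
    | Sum.inr (k, x), Sum.inr (k', y) => k = k' ∧ (Tgraph p).Adj x y
    | _, _ => False)

/-- A finite graph, encoded as a simple graph on some `Fin n`. -/
abbrev GraphFam := Set (Σ n : ℕ, SimpleGraph (Fin n))

/-- `Below 𝓗 G` means that some member of the family `𝓗` is (isomorphic to) an induced
subgraph of `G`; so `𝓗 ≤ 𝓗₂` iff `Below 𝓗 G` holds for every `G ∈ 𝓗₂`. -/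
def Below (𝓗 : GraphFam) {W : Type*} (G : SimpleGraph W) : Prop :=
  ∃ H ∈ 𝓗, Nonempty (H.2 ↪g G)

/-- The relation `𝓗₁ ≤ 𝓗₂` between families of graphs: every member of `𝓗₂` contains an
induced subgraph isomorphic to some member of `𝓗₁`. -/
def FamLE (𝓗₁ 𝓗₂ : GraphFam) : Prop :=
  ∀ H ∈ 𝓗₂, Below 𝓗₁ H.2

/-- The induced matching number `ν'(G)`. -/
noncomputable def indMatchNum {V : Type*} [Fintype V] (G : SimpleGraph V) : ℕ :=
  sSup {k : ℕ | ∃ M : G.Subgraph, M.IsInduced ∧ M.IsMatching ∧ M.verts.ncard = 2 * k}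

/-! Sumner's argument. Let `M` be a maximum matching exposing two vertices `a ≠ b`, chosen at
minimum distance over all maximum matchings. They are not adjacent, so a shortest `a`–`b` path
`a x₁ x₂ …` has length at least two, and `x₁` is matched, to `y` say. The three neighbours
`a`, `x₂`, `y` of `x₁` cannot be independent, and `a x₂` is not an edge. If `y = x₂` or
`y x₂` is an edge, exchanging `x₁ y` for `a x₁` exposes `y`; if `a y` is an edge, exchanging
`x₁ y` for `a y` exposes `x₁`. Either way a maximum matching exposes `b` and a vertex closer
to it. -/

namespace SimpleGraph

variable {V : Type*} {G : SimpleGraph V}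

namespace Subgraph

def IsMaximumMatching (M : G.Subgraph) : Prop :=
  M.IsMatching ∧ ∀ M' : G.Subgraph, M'.IsMatching → M'.verts.ncard ≤ M.verts.ncard

variable {M : G.Subgraph} {a b c w : V}

lemma IsMatching.deleteVerts (hM : M.IsMatching) {s : Set V}
    (hs : ∀ ⦃u v⦄, M.Adj u v → u ∈ s → v ∈ s) : (M.deleteVerts s).IsMatching := by
  rintro v ⟨hvM, hvs⟩
  obtain ⟨u, hvu, huniq⟩ := hM hvM
  refine ⟨u, ?_, fun y hy => huniq y (deleteVerts_adj.mp hy).2.2.2.2⟩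
  exact deleteVerts_adj.mpr ⟨hvM, hvs, M.edge_vert hvu.symm, fun hu => hvs (hs hvu.symm hu), hvu⟩

lemma IsMatching.sup_subgraphOfAdj (hM : M.IsMatching) (hac : G.Adj a c) (ha : a ∉ M.verts)
    (hc : c ∉ M.verts) : (M ⊔ G.subgraphOfAdj hac).IsMatching := by
  refine hM.sup (.subgraphOfAdj hac) ?_
  rw [hM.support_eq_verts, (IsMatching.subgraphOfAdj hac).support_eq_verts, subgraphOfAdj_verts,
    Set.disjoint_insert_right, Set.disjoint_singleton_right]
  exact ⟨ha, hc⟩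

/-- Exchange the matching edge `cw` for the edge `ac` at an exposed vertex `a`. -/
lemma IsMatching.exists_verts_eq_insert_sdiff (hM : M.IsMatching) (hcw : M.Adj c w)
    (ha : a ∉ M.verts) (hac : G.Adj a c) :
    ∃ M' : G.Subgraph, M'.IsMatching ∧ M'.verts = insert a (M.verts \ {w}) := by
  have hclosed : ∀ ⦃u v⦄, M.Adj u v → u ∈ ({c, w} : Set V) → v ∈ ({c, w} : Set V) := by
    rintro u v huv (rfl | rfl)
    · exact .inr (hM.eq_of_adj_left huv hcw)
    · exact .inl (hM.eq_of_adj_left huv hcw.symm)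
  refine ⟨M.deleteVerts {c, w} ⊔ G.subgraphOfAdj hac,
    (hM.deleteVerts hclosed).sup_subgraphOfAdj hac (fun h => ha h.1) (fun h => h.2 (by simp)), ?_⟩
  have hc : c ∈ M.verts := M.edge_vert hcw
  have hcw' : c ≠ w := (M.adj_sub hcw).ne
  ext v
  simp only [verts_sup, deleteVerts_verts, subgraphOfAdj_verts, Set.mem_union, Set.mem_sdiff,
    Set.mem_insert_iff, Set.mem_singleton_iff]
  grind

lemma IsMaximumMatching.exists_verts_eq_insert_sdiff (hM : M.IsMaximumMatching)
    (hcw : M.Adj c w) (ha : a ∉ M.verts) (hac : G.Adj a c) :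
    ∃ M' : G.Subgraph, M'.IsMaximumMatching ∧ M'.verts = insert a (M.verts \ {w}) := by
  obtain ⟨M', hM', hverts⟩ := hM.1.exists_verts_eq_insert_sdiff hcw ha hac
  refine ⟨M', ⟨hM', fun N hN => ?_⟩, hverts⟩
  rw [hverts, Set.ncard_exchange ha (M.edge_vert hcw.symm)]
  exact hM.2 N hN

lemma IsMaximumMatching.not_adj [Finite V] (hM : M.IsMaximumMatching) (ha : a ∉ M.verts)
    (hc : c ∉ M.verts) : ¬ G.Adj a c := by
  intro hac
  have hlt := hM.2 _ (hM.1.sup_subgraphOfAdj hac ha hc)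
  rw [verts_sup, subgraphOfAdj_verts, Set.union_insert, Set.union_singleton,
    Set.ncard_insert_of_notMem (by simp [hac.ne, ha]), Set.ncard_insert_of_notMem hc] at hlt
  omega

lemma IsMaximumMatching.deficiency_eq [Fintype V] (hM : M.IsMaximumMatching) :
    deficiency G = Fintype.card V - M.verts.ncard := by
  have hgreatest : IsGreatest {k | ∃ M : G.Subgraph, M.IsMatching ∧ M.verts.ncard = k}
      M.verts.ncard := by
    refine ⟨⟨M, hM.1, rfl⟩, ?_⟩
    rintro _ ⟨M', hM', rfl⟩
    exact hM.2 M' hM'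
  rw [deficiency, hgreatest.csSup_eq]

end Subgraph

lemma exists_isMaximumMatching [Finite V] (G : SimpleGraph V) :
    ∃ M : G.Subgraph, M.IsMaximumMatching := by
  obtain ⟨M, hM, hmax⟩ := Set.exists_max_image {M : G.Subgraph | M.IsMatching}
    (fun M => M.verts.ncard) (Set.toFinite _) ⟨⊥, fun v hv => by simp at hv⟩
  exact ⟨M, hM, hmax⟩

lemma adj_or_adj_or_adj_of_starGraph_free (hclaw : ¬ Nonempty (_root_.starGraph 3 ↪g G))
    {x p q r : V} (hxp : G.Adj x p) (hxq : G.Adj x q) (hxr : G.Adj x r)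
    (hpq : p ≠ q) (hpr : p ≠ r) (hqr : q ≠ r) : G.Adj p q ∨ G.Adj p r ∨ G.Adj q r := by
  by_contra! h
  obtain ⟨npq, npr, nqr⟩ := h
  refine hclaw ⟨⟨Sum.elim (fun _ => x) ![p, q, r], ?_⟩, fun {u v} => ?_⟩
  · simp [Function.Injective, Fin.forall_fin_succ, hxp.ne, hxq.ne, hxr.ne, hxp.ne', hxq.ne',
      hxr.ne', hpq, hpr, hqr, hpq.symm, hpr.symm, hqr.symm]
  · change G.Adj (Sum.elim _ _ u) (Sum.elim _ _ v) ↔ _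
    rcases u with _ | u <;> rcases v with _ | v <;> (try fin_cases u) <;> (try fin_cases v) <;>
      simp [_root_.starGraph, hxp, hxq, hxr, hxp.symm, hxq.symm, hxr.symm, npq, npr, nqr,
        G.adj_comm]

namespace Subgraph

variable {M : G.Subgraph} {a b : V}

lemma IsMaximumMatching.exists_dist_lt (hclaw : ¬ Nonempty (_root_.starGraph 3 ↪g G))
    [Finite V] (hM : M.IsMaximumMatching) (hab : G.Reachable a b) (ha : a ∉ M.verts)
    (hb : b ∉ M.verts) (hne : a ≠ b) :
    ∃ M' : G.Subgraph, M'.IsMaximumMatching ∧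
      ∃ a', a' ∉ M'.verts ∧ b ∉ M'.verts ∧ a' ≠ b ∧ G.dist a' b < G.dist a b := by
  have swap : ∀ {c w}, M.Adj c w → G.Adj a c → G.dist w b < G.dist a b →
      ∃ M' : G.Subgraph, M'.IsMaximumMatching ∧
        ∃ a', a' ∉ M'.verts ∧ b ∉ M'.verts ∧ a' ≠ b ∧ G.dist a' b < G.dist a b := by
    intro c w hcw hac hlt
    have hw : w ∈ M.verts := M.edge_vert hcw.symm
    obtain ⟨M', hM', hverts⟩ := hM.exists_verts_eq_insert_sdiff hcw ha hac
    refine ⟨M', hM', w, ?_, ?_, ?_, hlt⟩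
    · simp [hverts, ne_of_mem_of_not_mem hw ha]
    · simp [hverts, hne.symm, hb]
    · exact ne_of_mem_of_not_mem hw hb
  obtain ⟨p, hp⟩ := hab.exists_walk_length_eq_dist
  cases p with
  | nil => exact absurd rfl hne
  | @cons _ x₁ _ hax₁ q =>
  cases q with
  | nil => exact absurd hax₁ (hM.not_adj ha hb)
  | @cons _ x₂ _ hx₁x₂ r =>
  rw [Walk.length_cons, Walk.length_cons] at hp
  have hx₁ : x₁ ∈ M.verts := by
    by_contra hx₁
    exact hM.not_adj ha hx₁ hax₁
  obtain ⟨y, hx₁y, -⟩ := hM.1 hx₁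
  have hy : y ∈ M.verts := M.edge_vert hx₁y.symm
  have hx₂b : G.dist x₂ b ≤ r.length := dist_le r
  have hnadj : ¬ G.Adj a x₂ := fun h => by
    have := dist_le (.cons h r)
    grind [Walk.length_cons]
  have hax₂ : a ≠ x₂ := by
    rintro rfl
    omega
  by_cases hyx₂ : y = x₂
  · subst hyx₂
    exact swap hx₁y hax₁ (by omega)
  -- `a`, `x₂`, `y` are distinct neighbours of `x₁`, and `a x₂` is not an edge of a shortest path.
  rcases adj_or_adj_or_adj_of_starGraph_free hclaw hax₁.symm hx₁x₂ (M.adj_sub hx₁y) hax₂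
    (ne_of_mem_of_not_mem hy ha).symm (Ne.symm hyx₂) with h | hay | hx₂y
  · exact absurd h hnadj
  · have := dist_le (.cons hx₁x₂ r)
    exact swap hx₁y.symm hay (by grind [Walk.length_cons])
  · have := dist_le (.cons hx₂y.symm r)
    exact swap hx₁y hax₁ (by grind [Walk.length_cons])

theorem IsMaximumMatching.eq_of_notMem_verts (hconn : G.Connected)
    (hclaw : ¬ Nonempty (_root_.starGraph 3 ↪g G)) [Finite V] (hM : M.IsMaximumMatching)
    (ha : a ∉ M.verts) (hb : b ∉ M.verts) : a = b := by
  induction h : G.dist a b using Nat.strong_induction_on generalizing M a with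
  | _ n ih =>
  by_contra hne
  obtain ⟨M', hM', a', ha', hb', hne', hlt⟩ := hM.exists_dist_lt hclaw (hconn a b) ha hb hne
  exact hne' (ih _ (h ▸ hlt) hM' ha' hb' rfl)

end Subgraph

end SimpleGraph

/-- Every connected claw-free graph has deficiency at most one. -/
theorem deficiency_le_one_of_clawfree (V : Type) [Fintype V] (G : SimpleGraph V)
    (hconn : G.Connected) (hclaw : ¬ Nonempty (_root_.starGraph 3 ↪g G)) :
    deficiency G ≤ 1 := by
  obtain ⟨M, hM⟩ := G.exists_isMaximumMatching
  have hexposed : M.vertsᶜ.Subsingleton := fun a ha b hb =>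
    hM.eq_of_notMem_verts hconn hclaw ha hb
  calc deficiency G = Fintype.card V - M.verts.ncard := hM.deficiency_eq
    _ = M.vertsᶜ.ncard := by rw [Set.ncard_compl, Nat.card_eq_fintype_card]
    _ ≤ 1 := Set.ncard_le_one_iff_subsingleton.mpr hexposed
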